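/- For the linear potential U(x) = F·x_n on ℝⁿ with F>0, m>0, E ∈ ℝ, and any point x with x_n ≥ E/F, the Agmon distance from x to the hyperplane S_E^+ = {y ∈ ℝⁿ : y_n = E/F} equals (2/3)·√(2mF)·(x_n − E/F)^{3/2}; i.e. the infimum over C¹ paths γ:[0,1]→ℝⁿ with γ(0)=x and γ(1) ∈ S_E^+ of √(2m)·∫₀¹ (max(F·γ_n(t)−E,0))^{1/2}·‖γ'(t)‖ dt equals (2/3)·√(2mF)·(x_n − E/F)^{3/2}, and it is attained by the vertical straight segment g(t) = x − t·(x_n − E/F)·e_n. Equivalently, ρ̃_E(x, Px) = (2/3)·√(2mF)·‖x − Px‖^{3/2}, where Px = (x_1,…,x_{n−1}, E/F). -/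

import Mathlib

open MeasureTheory

/-- The Agmon length of a `C¹` path for mass `m`, energy `E`, potential `U`. -/
noncomputable def agmonLength {n : ℕ} (m E : ℝ) (U : EuclideanSpace ℝ (Fin n) → ℝ)
    (γ : ℝ → EuclideanSpace ℝ (Fin n)) : ℝ :=
  Real.sqrt (2 * m) * ∫ t in (0:ℝ)..1, Real.sqrt (max (U (γ t) - E) 0) * ‖deriv γ t‖

/-- The Agmon distance between two sets: the infimum of the Agmon length over `C¹`
paths starting in `A` and ending in `B`. -/
noncomputable def agmonDist {n : ℕ} (m E : ℝ) (U : EuclideanSpace ℝ (Fin n) → ℝ)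
    (A B : Set (EuclideanSpace ℝ (Fin n))) : ℝ :=
  sInf {L : ℝ | ∃ γ : ℝ → EuclideanSpace ℝ (Fin n),
    ContDiff ℝ 1 γ ∧ γ 0 ∈ A ∧ γ 1 ∈ B ∧ L = agmonLength m E U γ}

/-!
Since the potential depends only on `xₙ`, the speed of a path dominates the descent rate of its
last coordinate, `‖γ'‖ ≥ -γₙ'`. Substituting `u = γₙ(t)` therefore bounds the Agmon length of
every path from `x` to the hyperplane below by `√(2m) ∫_{E/F}^{xₙ} √(F u - E) du
= (2/3) √(2mF) (xₙ - E/F)^{3/2}`, and the vertical segment, for which `‖γ'‖ = -γₙ'`, attains it.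
-/

section CoordinateOfPath

variable {N : ℕ} {γ : ℝ → EuclideanSpace ℝ (Fin N)} (i : Fin N)

lemma hasDerivAt_apply_of_contDiff (hγ : ContDiff ℝ 1 γ) (t : ℝ) :
    HasDerivAt (fun s => γ s i) (deriv γ t i) t :=
  (EuclideanSpace.proj (𝕜 := ℝ) i).hasFDerivAt.comp_hasDerivAt t
    ((hγ.differentiable one_ne_zero t).hasDerivAt)

lemma continuous_deriv_apply_of_contDiff (hγ : ContDiff ℝ 1 γ) :
    Continuous fun t => deriv γ t i :=
  (EuclideanSpace.proj (𝕜 := ℝ) i).continuous.comp (hγ.continuous_deriv le_rfl)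

lemma integral_comp_apply_mul_neg_deriv {w : ℝ → ℝ} (hw : Continuous w)
    (hγ : ContDiff ℝ 1 γ) :
    ∫ t in (0 : ℝ)..1, w (γ t i) * -deriv γ t i = ∫ u in γ 1 i..γ 0 i, w u := by
  rw [intervalIntegral.integral_symm (γ 0 i),
    ← intervalIntegral.integral_comp_mul_deriv (fun t _ => hasDerivAt_apply_of_contDiff i hγ t)
      (continuous_deriv_apply_of_contDiff i hγ).continuousOn hw,
    ← intervalIntegral.integral_neg]
  simp only [Function.comp_apply, mul_neg]

lemma integral_le_integral_comp_apply_mul_norm_deriv {w : ℝ → ℝ} (hw : Continuous w)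
    (hw_nonneg : ∀ u, 0 ≤ w u) (hγ : ContDiff ℝ 1 γ) :
    ∫ u in γ 1 i..γ 0 i, w u ≤ ∫ t in (0 : ℝ)..1, w (γ t i) * ‖deriv γ t‖ := by
  have hwγ : Continuous fun t => w (γ t i) :=
    hw.comp ((EuclideanSpace.proj (𝕜 := ℝ) i).continuous.comp hγ.continuous)
  rw [← integral_comp_apply_mul_neg_deriv i hw hγ]
  refine intervalIntegral.integral_mono_on zero_le_one
    ((hwγ.mul (continuous_deriv_apply_of_contDiff i hγ).neg).intervalIntegrable 0 1)
    ((hwγ.mul (hγ.continuous_deriv le_rfl).norm).intervalIntegrable 0 1) fun t _ => ?_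
  have hcoord : |deriv γ t i| ≤ ‖deriv γ t‖ := by
    simpa only [Real.norm_eq_abs] using PiLp.norm_apply_le (deriv γ t) i
  exact mul_le_mul_of_nonneg_left ((neg_le_abs _).trans hcoord) (hw_nonneg _)

lemma integral_comp_apply_mul_norm_deriv_of_norm_deriv_eq {w : ℝ → ℝ} (hw : Continuous w)
    (hγ : ContDiff ℝ 1 γ) (hnorm : ∀ t, ‖deriv γ t‖ = -deriv γ t i) :
    ∫ t in (0 : ℝ)..1, w (γ t i) * ‖deriv γ t‖ = ∫ u in γ 1 i..γ 0 i, w u := by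
  simp only [hnorm]
  exact integral_comp_apply_mul_neg_deriv i hw hγ

end CoordinateOfPath

section PotentialOfOneCoordinate

variable {N : ℕ} (m E : ℝ) {U : EuclideanSpace ℝ (Fin N) → ℝ} {f : ℝ → ℝ} {i : Fin N}
  {γ : ℝ → EuclideanSpace ℝ (Fin N)}

lemma agmonLength_eq_of_apply (hU : ∀ x, U x = f (x i)) :
    agmonLength m E U γ =
      √(2 * m) * ∫ t in (0 : ℝ)..1, √(max (f (γ t i) - E) 0) * ‖deriv γ t‖ := by
  simp only [agmonLength, hU]

lemma integral_le_agmonLength (hf : Continuous f) (hU : ∀ x, U x = f (x i))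
    (hγ : ContDiff ℝ 1 γ) :
    √(2 * m) * ∫ u in γ 1 i..γ 0 i, √(max (f u - E) 0) ≤ agmonLength m E U γ := by
  rw [agmonLength_eq_of_apply m E hU]
  exact mul_le_mul_of_nonneg_left (integral_le_integral_comp_apply_mul_norm_deriv i
    (by fun_prop) (fun _ => Real.sqrt_nonneg _) hγ) (Real.sqrt_nonneg _)

lemma agmonLength_eq_integral_of_norm_deriv_eq (hf : Continuous f)
    (hU : ∀ x, U x = f (x i)) (hγ : ContDiff ℝ 1 γ)
    (hnorm : ∀ t, ‖deriv γ t‖ = -deriv γ t i) :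
    agmonLength m E U γ = √(2 * m) * ∫ u in γ 1 i..γ 0 i, √(max (f u - E) 0) := by
  rw [agmonLength_eq_of_apply m E hU, integral_comp_apply_mul_norm_deriv_of_norm_deriv_eq i
    (w := fun u => √(max (f u - E) 0)) (by fun_prop) hγ hnorm]

end PotentialOfOneCoordinate

lemma agmonDist_eq_agmonLength_of_le {N : ℕ} {m E : ℝ} {U : EuclideanSpace ℝ (Fin N) → ℝ}
    {A B : Set (EuclideanSpace ℝ (Fin N))} {γ₀ : ℝ → EuclideanSpace ℝ (Fin N)}
    (hγ₀ : ContDiff ℝ 1 γ₀) (h0 : γ₀ 0 ∈ A) (h1 : γ₀ 1 ∈ B)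
    (hle : ∀ γ, ContDiff ℝ 1 γ → γ 0 ∈ A → γ 1 ∈ B →
      agmonLength m E U γ₀ ≤ agmonLength m E U γ) :
    agmonDist m E U A B = agmonLength m E U γ₀ :=
  IsLeast.csInf_eq ⟨⟨γ₀, hγ₀, h0, h1, rfl⟩, by
    rintro _ ⟨γ, hγ, hγ0, hγ1, rfl⟩
    exact hle γ hγ hγ0 hγ1⟩

lemma integral_sqrt_max_mul_sub {F : ℝ} (E : ℝ) (hF : 0 < F) {c : ℝ} (hc : E / F ≤ c) :
    ∫ u in E / F..c, √(max (F * u - E) 0) = 2 / 3 * √F * (c - E / F) ^ ((3 : ℝ) / 2) := by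
  have hfactor (u : ℝ) : √(max (F * u - E) 0) = √F * √(max (u - E / F) 0) := by
    rw [← Real.sqrt_mul hF.le, mul_max_of_nonneg _ _ hF.le, mul_zero, mul_sub,
      mul_div_cancel₀ _ hF.ne']
  have hrpow : ∫ v in (0 : ℝ)..c - E / F, √(max v 0) =
      ∫ v in (0 : ℝ)..c - E / F, v ^ (1 / 2 : ℝ) :=
    intervalIntegral.integral_congr fun v hv => by
      rw [Set.uIcc_of_le (sub_nonneg.2 hc)] at hv
      rw [max_eq_left hv.1, Real.sqrt_eq_rpow]
  simp only [hfactor]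
  rw [intervalIntegral.integral_const_mul,
    intervalIntegral.integral_comp_sub_right (fun v => √(max v 0)), sub_self, hrpow,
    integral_rpow (Or.inl (by norm_num)), Real.zero_rpow (by norm_num)]
  norm_num
  ring

lemma hasDerivAt_sub_mul_smul {V : Type*} [NormedAddCommGroup V] [NormedSpace ℝ V]
    (x v : V) (d t : ℝ) : HasDerivAt (fun t : ℝ => x - (t * d) • v) (-(d • v)) t := by
  simpa using (((hasDerivAt_id t).mul_const d).smul_const v).const_sub x

lemma norm_sub_eq_abs_of_ofLp_eq_update {ι : Type*} [Fintype ι] [DecidableEq ι]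
    {x y : EuclideanSpace ℝ ι} {i : ι} {a : ℝ} (h : y.ofLp = Function.update x.ofLp i a) :
    ‖x - y‖ = |x i - a| := by
  have hsingle : x - y = EuclideanSpace.single i (x i - a) := by
    ext j
    rcases eq_or_ne j i with rfl | hj
    · simp [h]
    · simp [h, hj]
  rw [hsingle, PiLp.norm_single, Real.norm_eq_abs]
theorem agmon_distance_linear_potential_general
    (n : ℕ) (m E F : ℝ) (hF : 0 < F)
    (U : EuclideanSpace ℝ (Fin (n + 2)) → ℝ)
    (hU : ∀ x, U x = F * x (Fin.last (n + 1)))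
    (P : EuclideanSpace ℝ (Fin (n + 2)) → EuclideanSpace ℝ (Fin (n + 2)))
    (hP : ∀ y, P y = Function.update y (Fin.last (n + 1)) (E / F))
    (x : EuclideanSpace ℝ (Fin (n + 2)))
    (hx : E / F ≤ x (Fin.last (n + 1))) :
    agmonDist m E U {x} {y | y (Fin.last (n + 1)) = E / F} =
      (2 / 3) * Real.sqrt (2 * m * F) *
        (x (Fin.last (n + 1)) - E / F) ^ ((3 : ℝ) / 2) ∧
    agmonLength m E U (fun t => x - (t * (x (Fin.last (n + 1)) - E / F)) •
        EuclideanSpace.single (Fin.last (n + 1)) (1 : ℝ)) =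
      (2 / 3) * Real.sqrt (2 * m * F) *
        (x (Fin.last (n + 1)) - E / F) ^ ((3 : ℝ) / 2) ∧
    agmonDist m E U {x} {y | y (Fin.last (n + 1)) = E / F} =
      (2 / 3) * Real.sqrt (2 * m * F) *
        ‖x - P x‖ ^ ((3 : ℝ) / 2) := by
  set i := Fin.last (n + 1)
  set d := x i - E / F
  have hd : 0 ≤ d := sub_nonneg.2 hx
  set g : ℝ → EuclideanSpace ℝ (Fin (n + 2)) := fun t => x - (t * d) • EuclideanSpace.single i 1
  have hf : Continuous fun u : ℝ => F * u := by fun_prop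
  have hg : ContDiff ℝ 1 g := by fun_prop
  have hg0 : g 0 = x := by simp [g]
  have hg1 : g 1 i = E / F := by simp [g, d]
  have hnorm (t : ℝ) : ‖deriv g t‖ = -deriv g t i := by
    simp [g, (hasDerivAt_sub_mul_smul _ _ d t).deriv, norm_smul, abs_of_nonneg hd]
  have hvalue : √(2 * m) * ∫ u in E / F..x i, √(max (F * u - E) 0) =
      2 / 3 * √(2 * m * F) * d ^ ((3 : ℝ) / 2) := by
    rw [integral_sqrt_max_mul_sub E hF hx, Real.sqrt_mul' _ hF.le]
    ring
  have hlen : agmonLength m E U g = 2 / 3 * √(2 * m * F) * d ^ ((3 : ℝ) / 2) := by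
    rw [agmonLength_eq_integral_of_norm_deriv_eq m E hf hU hg hnorm, hg0, hg1, hvalue]
  have hdist : agmonDist m E U {x} {y | y i = E / F} =
      2 / 3 * √(2 * m * F) * d ^ ((3 : ℝ) / 2) := by
    rw [agmonDist_eq_agmonLength_of_le hg hg0 hg1 fun γ hγ hγ0 hγ1 => ?_, hlen]
    rw [hlen, ← hvalue, ← Set.mem_singleton_iff.1 hγ0, ← (hγ1 : γ 1 i = E / F)]
    exact integral_le_agmonLength m E hf hU hγ
  refine ⟨hdist, hlen, ?_⟩
  rw [hdist, norm_sub_eq_abs_of_ofLp_eq_update (hP x), abs_of_nonneg hd]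

/-- Eq. (28) of the paper.  For the linear potential `U(x) = F xₙ`
on `ℝ^{n+2}` with `F > 0`, `m > 0`, and any point `x` with `xₙ ≥ E/F`, the Agmon
distance from `x` to the hyperplane `S_E^+ = {yₙ = E/F}` equals
`(2/3) √(2 m F) (xₙ − E/F)^{3/2}`, it is attained by the vertical straight segment
`g(t) = x − t (xₙ − E/F) eₙ`, and equals `(2/3) √(2 m F) ‖x − P x‖^{3/2}` with
`P x = (x₁,…,x_{n−1}, E/F)`. -/
theorem agmon_distance_linear_potential
    (n : ℕ) (m E F : ℝ) (hm : 0 < m) (hF : 0 < F)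
    (U : EuclideanSpace ℝ (Fin (n + 2)) → ℝ)
    (hU : ∀ x, U x = F * x (Fin.last (n + 1)))
    (P : EuclideanSpace ℝ (Fin (n + 2)) → EuclideanSpace ℝ (Fin (n + 2)))
    (hP : ∀ y, P y = Function.update y (Fin.last (n + 1)) (E / F))
    (x : EuclideanSpace ℝ (Fin (n + 2)))
    (hx : E / F ≤ x (Fin.last (n + 1))) :
    agmonDist m E U {x} {y | y (Fin.last (n + 1)) = E / F} =
      (2 / 3) * Real.sqrt (2 * m * F) *
        (x (Fin.last (n + 1)) - E / F) ^ ((3 : ℝ) / 2) ∧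
    agmonLength m E U (fun t => x - (t * (x (Fin.last (n + 1)) - E / F)) •
        EuclideanSpace.single (Fin.last (n + 1)) (1 : ℝ)) =
      (2 / 3) * Real.sqrt (2 * m * F) *
        (x (Fin.last (n + 1)) - E / F) ^ ((3 : ℝ) / 2) ∧
    agmonDist m E U {x} {y | y (Fin.last (n + 1)) = E / F} =
      (2 / 3) * Real.sqrt (2 * m * F) *
        ‖x - P x‖ ^ ((3 : ℝ) / 2) :=
  agmon_distance_linear_potential_general n m E F hF U hU P hP x hx
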